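/- arXiv:2307.04302 — 2 statements merged into one kernel-verified Lean document; each statement's English description precedes it below -/
import Mathlib

section
/- For the derandomized comparison in the unit-demand setting: if every agent in the reserve-price selling phase is charged her maximum willingness-to-pay min{w_{i,k(i)}·x_{i,k(i)}, B_i} for the item k(i) maximizing her obtainable value among items with r_j ≤ w_{ij}, then the resulting revenue ALG satisfies ALG' ≤ 4·ALG, where ALG' is the revenue of the procedure that charges r_{k(i)}·x_{i,k(i)} for the item agent i buys in a fixed benchmark solution. -/
/-! Charge every benchmark purchase `x' i (a i) * r (a i)` either to agent `i`'s payment or to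
the item `a i`. Since the arriving agent picks the item `k` maximising
`v i k * min (B i / r k) (R k)` and pays at the rate `v i k / τ i ≥ r k`, her payment is at
least `min (B i) (r j * R j)` for every affordable item `j` with current supply `R j`. Hence if
item `a i` ends at least half unsold, the purchase, worth at most `min (r (a i)) (B i)`, is at
most twice her payment. An item that ends more than half sold carries benchmark revenue at
most `r j`, less than twice the reserve value of its sold part; and every agent pays at least
the reserve price of what she buys. Both parts are therefore at most `2 * ALG`. -/

open Classical in
/-- The primary reserve-price selling procedure of Algorithm 4 for unit-demand agents:
agents arrive in the order of the list; given the remaining fractions `R`, an arriving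
agent `i` picks the most profitable affordable item
`k = argmax_{j : r j ≤ v i j / τ i} v i j * min (B i / r j) (R j)`, buys
`x = min (B i / r k) (R k)` of it and pays her maximum willingness-to-pay
`min (v i k / τ i * x) (B i)`.  Returns the full allocation and payments. -/
noncomputable def primary (n m : ℕ) (v : Fin n → Fin m → ℝ) (B τ : Fin n → ℝ)
    (r : Fin m → ℝ) :
    List (Fin n) → (Fin m → ℝ) → ((Fin n → Fin m → ℝ) × (Fin n → ℝ))
  | [], _ => (fun _ _ => 0, fun _ => 0)
  | i :: rest, R =>
    let avail : Finset (Fin m) := Finset.univ.filter (fun j => r j ≤ v i j / τ i)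
    if h : avail.Nonempty then
      let k := (avail.exists_max_image (fun j => v i j * min (B i / r j) (R j)) h).choose
      let xk := min (B i / r k) (R k)
      let res := primary n m v B τ r rest (Function.update R k (R k - xk))
      (fun i' j => if i' = i ∧ j = k then xk else res.1 i' j,
       fun i' => if i' = i then min (v i k / τ i * xk) (B i) else res.2 i')
    else
      primary n m v B τ r rest R

section Primary

variable {n m : ℕ} {v : Fin n → Fin m → ℝ} {B τ : Fin n → ℝ} {r : Fin m → ℝ}

theorem primary_nil (R : Fin m → ℝ) :
    primary n m v B τ r [] R = (fun _ _ => 0, fun _ => 0) := by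
  rw [primary]

theorem primary_cons_of_forall_lt {i : Fin n} (h : ∀ j, v i j / τ i < r j)
    (l : List (Fin n)) (R : Fin m → ℝ) :
    primary n m v B τ r (i :: l) R = primary n m v B τ r l R := by
  rw [primary, dif_neg]
  simpa [Finset.filter_nonempty_iff] using h

theorem exists_primary_cons {i : Fin n} (h : ∃ j, r j ≤ v i j / τ i)
    (l : List (Fin n)) (R : Fin m → ℝ) :
    ∃ k, r k ≤ v i k / τ i ∧
      (∀ j, r j ≤ v i j / τ i →
        v i j * min (B i / r j) (R j) ≤ v i k * min (B i / r k) (R k)) ∧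
      primary n m v B τ r (i :: l) R =
        (fun i' j => if i' = i ∧ j = k then min (B i / r k) (R k) else
          (primary n m v B τ r l (Function.update R k (R k - min (B i / r k) (R k)))).1 i' j,
         fun i' => if i' = i then min (v i k / τ i * min (B i / r k) (R k)) (B i) else
          (primary n m v B τ r l (Function.update R k (R k - min (B i / r k) (R k)))).2 i') := by
  have hne : (Finset.univ.filter fun j => r j ≤ v i j / τ i).Nonempty := by
    simpa [Finset.filter_nonempty_iff] using h
  obtain ⟨hk, hmax⟩ :=
    (Finset.univ.filter fun j => r j ≤ v i j / τ i).exists_max_image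
      (fun j => v i j * min (B i / r j) (R j)) hne |>.choose_spec
  refine ⟨_, (Finset.mem_filter.mp hk).2, fun j hj => hmax j (by simpa using hj), ?_⟩
  rw [primary, dif_pos hne]

theorem primary_of_not_mem {i : Fin n} {l : List (Fin n)} (hi : i ∉ l) (R : Fin m → ℝ) :
    (primary n m v B τ r l R).1 i = 0 ∧ (primary n m v B τ r l R).2 i = 0 := by
  induction l generalizing R with
  | nil => exact ⟨rfl, rfl⟩
  | cons i₀ l ih =>
    rw [List.mem_cons, not_or] at hi
    obtain ⟨hne, hi⟩ := hi
    by_cases h : ∃ j, r j ≤ v i₀ j / τ i₀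
    · obtain ⟨k, -, -, heq⟩ := exists_primary_cons h l R
      rw [heq]
      simp [hne, ih hi, funext_iff]
    · simp only [not_exists, not_le] at h
      rw [primary_cons_of_forall_lt h]
      exact ih hi R

theorem update_sub_min_nonneg {α : Type*} [DecidableEq α] {R : α → ℝ} (hR : ∀ j, 0 ≤ R j)
    (k : α) (c : ℝ) (j : α) : 0 ≤ Function.update R k (R k - min c (R k)) j := by
  rcases eq_or_ne j k with rfl | hj
  · simp
  · simpa [hj] using hR j

theorem primary_fst_nonneg (hB : ∀ i, 0 ≤ B i) (hr : ∀ j, 0 ≤ r j) (l : List (Fin n))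
    {R : Fin m → ℝ} (hR : ∀ j, 0 ≤ R j) (i : Fin n) (j : Fin m) :
    0 ≤ (primary n m v B τ r l R).1 i j := by
  induction l generalizing R with
  | nil => exact le_rfl
  | cons i₀ l ih =>
    by_cases h : ∃ j, r j ≤ v i₀ j / τ i₀
    · obtain ⟨k, -, -, heq⟩ := exists_primary_cons h l R
      rw [heq]
      dsimp only
      split_ifs
      · exact le_min (div_nonneg (hB i₀) (hr k)) (hR k)
      · exact ih (update_sub_min_nonneg hR k _)
    · simp only [not_exists, not_le] at h
      rw [primary_cons_of_forall_lt h]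
      exact ih hR

theorem sum_mul_primary_fst_le_primary_snd (hB : ∀ i, 0 ≤ B i) (hr : ∀ j, 0 < r j)
    {l : List (Fin n)} (hl : l.Nodup) {R : Fin m → ℝ} (hR : ∀ j, 0 ≤ R j) (i : Fin n) :
    ∑ j, r j * (primary n m v B τ r l R).1 i j ≤ (primary n m v B τ r l R).2 i := by
  induction l generalizing R with
  | nil => simp [primary_nil]
  | cons i₀ l ih =>
    obtain ⟨hi₀, hl⟩ := List.nodup_cons.mp hl
    by_cases h : ∃ j, r j ≤ v i₀ j / τ i₀
    · obtain ⟨k, hk, -, heq⟩ := exists_primary_cons h l R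
      rw [heq]
      dsimp only
      rcases eq_or_ne i i₀ with rfl | hne
      · set x := min (B i / r k) (R k)
        have hx : 0 ≤ x := le_min (div_nonneg (hB i) (hr k).le) (hR k)
        simp only [true_and, if_true, (primary_of_not_mem hi₀ _).1, Pi.zero_apply,
          mul_ite, mul_zero, Finset.sum_ite_eq', Finset.mem_univ]
        refine le_min (mul_le_mul_of_nonneg_right hk hx) ?_
        calc r k * x ≤ r k * (B i / r k) :=
              mul_le_mul_of_nonneg_left (min_le_left _ _) (hr k).le
          _ = B i := mul_div_cancel₀ _ (hr k).ne'
      · simpa only [hne, false_and, if_false] using ih hl (update_sub_min_nonneg hR k _)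
    · simp only [not_exists, not_le] at h
      rw [primary_cons_of_forall_lt h]
      exact ih hl hR

theorem min_mul_le_primary_cons_snd (hB : ∀ i, 0 ≤ B i) (hτ : ∀ i, 0 < τ i)
    (hr : ∀ j, 0 < r j) {i : Fin n} {j : Fin m} (hj : r j ≤ v i j / τ i)
    (l : List (Fin n)) {R : Fin m → ℝ} (hR : ∀ j, 0 ≤ R j) :
    min (B i) (r j * R j) ≤ (primary n m v B τ r (i :: l) R).2 i := by
  obtain ⟨k, -, hmax, heq⟩ := exists_primary_cons ⟨j, hj⟩ l R
  rw [heq]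
  dsimp only
  rw [if_pos rfl]
  refine le_min ?_ (min_le_left _ _)
  calc min (B i) (r j * R j) = r j * min (B i / r j) (R j) := by
        rw [mul_min_of_nonneg _ _ (hr j).le, mul_div_cancel₀ _ (hr j).ne']
    _ ≤ v i j / τ i * min (B i / r j) (R j) :=
        mul_le_mul_of_nonneg_right hj (le_min (div_nonneg (hB i) (hr j).le) (hR j))
    _ = v i j * min (B i / r j) (R j) / τ i := by ring
    _ ≤ v i k * min (B i / r k) (R k) / τ i :=
        div_le_div_of_nonneg_right (hmax j hj) (hτ i).le
    _ = v i k / τ i * min (B i / r k) (R k) := by ring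

theorem exists_primary_cons_eq_primary {i₀ : Fin n} {l : List (Fin n)} (hi₀ : i₀ ∉ l)
    {R : Fin m → ℝ} (hR : ∀ j, 0 ≤ R j) :
    ∃ R' : Fin m → ℝ, (∀ j, 0 ≤ R' j) ∧
      (∀ i ≠ i₀, (primary n m v B τ r (i₀ :: l) R).2 i = (primary n m v B τ r l R').2 i) ∧
      ∀ j, R j - ∑ i, (primary n m v B τ r (i₀ :: l) R).1 i j
        = R' j - ∑ i, (primary n m v B τ r l R').1 i j := by
  by_cases h : ∃ j, r j ≤ v i₀ j / τ i₀
  · obtain ⟨k, -, -, heq⟩ := exists_primary_cons h l R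
    refine ⟨_, update_sub_min_nonneg hR k (B i₀ / r k), fun i hi => by rw [heq]; simp [hi],
      fun j => ?_⟩
    rw [heq]
    dsimp only
    rw [← Finset.add_sum_erase _ _ (Finset.mem_univ i₀),
      ← Finset.add_sum_erase _ _ (Finset.mem_univ i₀),
      Finset.sum_congr rfl fun i hi => if_neg fun h => Finset.ne_of_mem_erase hi h.1]
    simp only [true_and, (primary_of_not_mem hi₀ _).1, Pi.zero_apply, Function.update_apply]
    split_ifs <;> subst_vars <;> ring
  · simp only [not_exists, not_le] at h
    exact ⟨R, hR, fun i _ => by rw [primary_cons_of_forall_lt h],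
      fun j => by rw [primary_cons_of_forall_lt h]⟩

theorem min_mul_remaining_le_primary_snd (hB : ∀ i, 0 ≤ B i) (hτ : ∀ i, 0 < τ i)
    (hr : ∀ j, 0 < r j) {l : List (Fin n)} (hl : l.Nodup) {R : Fin m → ℝ}
    (hR : ∀ j, 0 ≤ R j) {i : Fin n} (hi : i ∈ l) {j : Fin m} (hj : r j ≤ v i j / τ i) :
    min (B i) (r j * (R j - ∑ i', (primary n m v B τ r l R).1 i' j))
      ≤ (primary n m v B τ r l R).2 i := by
  induction l generalizing R with
  | nil => cases hi
  | cons i₀ l ih =>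
    obtain ⟨hi₀, hl⟩ := List.nodup_cons.mp hl
    rcases eq_or_ne i i₀ with rfl | hne
    · refine le_trans (min_le_min_left _ ?_) (min_mul_le_primary_cons_snd hB hτ hr hj l hR)
      have hsold : 0 ≤ ∑ i', (primary n m v B τ r (i :: l) R).1 i' j :=
        Finset.sum_nonneg fun i' _ => primary_fst_nonneg hB (fun j => (hr j).le) _ hR i' j
      exact mul_le_mul_of_nonneg_left (sub_le_self _ hsold) (hr j).le
    · obtain ⟨R', hR', hpay, hrem⟩ := exists_primary_cons_eq_primary hi₀ hR
      rw [hrem, hpay i hne]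
      exact ih hl hR' (List.mem_of_ne_of_mem hne hi)

theorem primary_snd_nonneg (hB : ∀ i, 0 ≤ B i) (hr : ∀ j, 0 < r j) {l : List (Fin n)}
    (hl : l.Nodup) {R : Fin m → ℝ} (hR : ∀ j, 0 ≤ R j) (i : Fin n) :
    0 ≤ (primary n m v B τ r l R).2 i :=
  (Finset.sum_nonneg fun j _ =>
    mul_nonneg (hr j).le (primary_fst_nonneg hB (fun j => (hr j).le) l hR i j)).trans
    (sum_mul_primary_fst_le_primary_snd hB hr hl hR i)

theorem sum_mul_sum_primary_fst_le_sum_primary_snd (hB : ∀ i, 0 ≤ B i) (hr : ∀ j, 0 < r j)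
    {l : List (Fin n)} (hl : l.Nodup) {R : Fin m → ℝ} (hR : ∀ j, 0 ≤ R j) :
    ∑ j, r j * ∑ i, (primary n m v B τ r l R).1 i j ≤ ∑ i, (primary n m v B τ r l R).2 i := by
  simp_rw [Finset.mul_sum]
  rw [Finset.sum_comm]
  exact Finset.sum_le_sum fun i _ => sum_mul_primary_fst_le_primary_snd hB hr hl hR i

theorem mul_le_two_mul_primary_snd_or_remaining_lt_half (hB : ∀ i, 0 ≤ B i)
    (hτ : ∀ i, 0 < τ i) (hr : ∀ j, 0 < r j) {l : List (Fin n)} (hl : l.Nodup)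
    {R : Fin m → ℝ} (hR : ∀ j, 0 ≤ R j) {i : Fin n} (hi : i ∈ l) {j : Fin m} {t : ℝ}
    (ht0 : 0 ≤ t) (ht : t ≤ min 1 (B i / r j)) (hres : 0 < t → r j ≤ v i j / τ i) :
    t * r j ≤ 2 * (primary n m v B τ r l R).2 i ∨
      R j - ∑ i', (primary n m v B τ r l R).1 i' j < 1 / 2 := by
  rcases ht0.eq_or_lt with rfl | htpos
  · exact Or.inl (by simpa using primary_snd_nonneg hB hr hl hR i)
  refine or_iff_not_imp_right.mpr fun hhalf => ?_
  rw [not_lt] at hhalf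
  have hpay := min_mul_remaining_le_primary_snd hB hτ hr hl hR hi (hres htpos)
  calc t * r j ≤ min 1 (B i / r j) * r j := mul_le_mul_of_nonneg_right ht (hr j).le
    _ = min (r j) (B i) := by
      rw [min_mul_of_nonneg _ _ (hr j).le, one_mul, div_mul_cancel₀ _ (hr j).ne']
    _ ≤ 2 * min (B i) (r j * (R j - ∑ i', (primary n m v B τ r l R).1 i' j)) := by
      rw [mul_min_of_nonneg _ _ zero_le_two]
      exact le_min (by linarith [min_le_right (r j) (B i), hB i])
        (by nlinarith [min_le_left (r j) (B i), hr j])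
    _ ≤ 2 * (primary n m v B τ r l R).2 i := by linarith

end Primary

theorem sum_filter_mul_le_two_mul_sum {ι : Type*} [Fintype ι] {q r s : ι → ℝ}
    (hq : ∀ j, q j ≤ 1) (hr : ∀ j, 0 ≤ r j) (hs : ∀ j, 0 ≤ s j) :
    ∑ j ∈ Finset.univ.filter (fun j => 1 - s j < 1 / 2), q j * r j ≤ 2 * ∑ j, r j * s j := by
  rw [Finset.mul_sum]
  calc ∑ j ∈ Finset.univ.filter (fun j => 1 - s j < 1 / 2), q j * r j
      ≤ ∑ j ∈ Finset.univ.filter (fun j => 1 - s j < 1 / 2), 2 * (r j * s j) :=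
        Finset.sum_le_sum fun j hj => by nlinarith [(Finset.mem_filter.mp hj).2, hq j, hr j]
    _ ≤ ∑ j, 2 * (r j * s j) :=
        Finset.sum_le_sum_of_subset_of_nonneg (Finset.filter_subset _ _)
          fun j _ _ => mul_nonneg zero_le_two (mul_nonneg (hr j) (hs j))

theorem stmt_18_general (n m : ℕ) (v : Fin n → Fin m → ℝ) (B τ : Fin n → ℝ) (r : Fin m → ℝ)
    (hB : ∀ i, 0 < B i) (hτ : ∀ i, 0 < τ i)
    (hr : ∀ j, 0 < r j)
    (l : List (Fin n)) (hl : ∀ i, i ∈ l) (hlnd : l.Nodup)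
    (x' : Fin n → Fin m → ℝ) (a : Fin n → Fin m)
    (hx'0 : ∀ i j, 0 ≤ x' i j)
    (hx'supp : ∀ i j, j ≠ a i → x' i j = 0)
    (hx'le : ∀ i, x' i (a i) ≤ min 1 (B i / r (a i)))
    (hx'supply : ∀ j, ∑ i, x' i j ≤ 1)
    (hx'res : ∀ i j, 0 < x' i j → r j ≤ v i j / τ i) :
    ∑ i, ∑ j, x' i j * r j
      ≤ 4 * ∑ i, (primary n m v B τ r l (fun _ => 1)).2 i := by
  have hB0 : ∀ i, 0 ≤ B i := fun i => (hB i).le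
  have hR : ∀ _ : Fin m, (0 : ℝ) ≤ 1 := fun _ => zero_le_one
  set alloc := (primary n m v B τ r l fun _ => 1).1
  set pay := (primary n m v B τ r l fun _ => 1).2
  set F := Finset.univ.filter fun j => 1 - ∑ i, alloc i j < 1 / 2
  have hpay : ∀ i, 0 ≤ pay i := primary_snd_nonneg hB0 hr hlnd hR
  have hagent : ∀ i, ∑ j, x' i j * r j ≤ 2 * pay i + ∑ j ∈ F, x' i j * r j := by
    intro i
    have hF : ∀ j ∈ F, 0 ≤ x' i j * r j := fun j _ => mul_nonneg (hx'0 i j) (hr j).le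
    rw [Finset.sum_eq_single (a i) (fun j _ hj => by rw [hx'supp i j hj, zero_mul]) (by simp)]
    rcases mul_le_two_mul_primary_snd_or_remaining_lt_half hB0 hτ hr hlnd hR (hl i)
      (hx'0 i (a i)) (hx'le i) (hx'res i (a i)) with h | h
    · linarith [Finset.sum_nonneg hF]
    · linarith [hpay i, Finset.single_le_sum hF (Finset.mem_filter.mpr ⟨Finset.mem_univ _, h⟩)]
  have hcharge : ∑ j ∈ F, ∑ i, x' i j * r j ≤ 2 * ∑ j, r j * ∑ i, alloc i j := by
    simp only [← Finset.sum_mul]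
    exact sum_filter_mul_le_two_mul_sum hx'supply (fun j => (hr j).le) fun j =>
      Finset.sum_nonneg fun i _ => primary_fst_nonneg hB0 (fun j => (hr j).le) l hR i j
  calc ∑ i, ∑ j, x' i j * r j ≤ ∑ i, (2 * pay i + ∑ j ∈ F, x' i j * r j) :=
        Finset.sum_le_sum fun i _ => hagent i
    _ = 2 * ∑ i, pay i + ∑ j ∈ F, ∑ i, x' i j * r j := by
        rw [Finset.sum_add_distrib, Finset.mul_sum, Finset.sum_comm]
    _ ≤ 4 * ∑ i, pay i := by
        have hrev : ∑ j, r j * ∑ i, alloc i j ≤ ∑ i, pay i :=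
          sum_mul_sum_primary_fst_le_sum_primary_snd hB0 hr hlnd hR
        linarith

/-- Comparison of the auxiliary and primary procedures (unit-demand setting): if the
auxiliary procedure sells each agent `i` a fraction `x' i (a i) ≤ min 1 (B i / r (a i))`
of a single predetermined item at its reserve price (respecting unit supply and
reserve-price availability), then its revenue is at most four times the revenue of the
primary procedure, which charges every agent her maximum willingness-to-pay. -/
theorem stmt_18 (n m : ℕ) (v : Fin n → Fin m → ℝ) (B τ : Fin n → ℝ) (r : Fin m → ℝ)
    (hv : ∀ i j, 0 ≤ v i j) (hB : ∀ i, 0 < B i) (hτ : ∀ i, 0 < τ i)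
    (hr : ∀ j, 0 < r j)
    (l : List (Fin n)) (hl : ∀ i, i ∈ l) (hlnd : l.Nodup)
    (x' : Fin n → Fin m → ℝ) (a : Fin n → Fin m)
    (hx'0 : ∀ i j, 0 ≤ x' i j)
    (hx'supp : ∀ i j, j ≠ a i → x' i j = 0)
    (hx'le : ∀ i, x' i (a i) ≤ min 1 (B i / r (a i)))
    (hx'supply : ∀ j, ∑ i, x' i j ≤ 1)
    (hx'res : ∀ i j, 0 < x' i j → r j ≤ v i j / τ i) :
    ∑ i, ∑ j, x' i j * r j
      ≤ 4 * ∑ i, (primary n m v B τ r l (fun _ => 1)).2 i :=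
  stmt_18_general n m v B τ r hB hτ hr l hl hlnd x' a hx'0 hx'supp hx'le hx'supply hx'res
end

section
/- In the single divisible item setting, suppose the auxiliary optimal solution assigns fractions x*_i with payments p*_i = x*_i·v_i/τ_i ≤ B_i and Σ_i x*_i ≤ 1, and the selling procedure with reserve price r does NOT sell out the item. Then Σ_{i∈R} p*_i ≤ ALG + r, where R is the set of agents offered the item, ALG is the revenue collected, and every agent in R who did not exhaust her budget satisfies v_i/τ_i < r. -/
/-! An agent who exhausted her budget has `p*_i ≤ B_i = r·y_i`, any other has
`p*_i ≤ r·x*_i`; so every agent of `R` has `p*_i ≤ r·y_i + r·x*_i`, and summing over `R`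
with `Σ x* ≤ 1` gives `ALG + r`. -/

open Finset

lemma mul_le_reserve_mul_add_reserve_mul {x q B r y : ℝ} (hr : 0 ≤ r) (hx : 0 ≤ x)
    (hy : 0 ≤ y) (hB : x * q ≤ B) (hcase : r * y = B ∨ q < r) :
    x * q ≤ r * y + r * x := by
  rcases hcase with hexhausted | hbelow
  · nlinarith
  · nlinarith [mul_le_mul_of_nonneg_left hbelow.le hx]

theorem stmt_19_general (n : ℕ) (v B τ xstar pstar y : Fin n → ℝ)
    (R : Finset (Fin n)) (r ALG : ℝ)
    (hr : 0 ≤ r)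
    (hps : ∀ i, pstar i = xstar i * (v i / τ i))
    (hpB : ∀ i, pstar i ≤ B i)
    (hx0 : ∀ i, 0 ≤ xstar i) (hx1 : ∑ i, xstar i ≤ 1)
    (hy0 : ∀ i, 0 ≤ y i)
    (hALG : ALG = r * ∑ i ∈ R, y i)
    (hcase : ∀ i ∈ R, r * y i = B i ∨ v i / τ i < r) :
    ∑ i ∈ R, pstar i ≤ ALG + r := by
  have hxR : ∑ i ∈ R, xstar i ≤ 1 := (sum_le_univ_sum_of_nonneg hx0).trans hx1
  calc ∑ i ∈ R, pstar i ≤ ∑ i ∈ R, (r * y i + r * xstar i) :=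
        sum_le_sum fun i hi => hps i ▸
          mul_le_reserve_mul_add_reserve_mul hr (hx0 i) (hy0 i) (hps i ▸ hpB i) (hcase i hi)
    _ = ALG + r * ∑ i ∈ R, xstar i := by rw [sum_add_distrib, ← mul_sum, ← mul_sum, hALG]
    _ ≤ ALG + r := by linarith [mul_le_of_le_one_right hr hxR]

/-- Single divisible item: if the reserve-price selling procedure with reserve `r` does
not sell out the item, so that every offered agent `i ∈ R` either exhausted her budget
(`r * y i = B i`) or satisfies `v i / τ i < r`, then the optimal payments
`p*_i = x*_i · v_i/τ_i ≤ B_i` (with `Σ x* ≤ 1`) of the agents in `R` total at most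
`ALG + r`, where `ALG = r * Σ_{i∈R} y i` is the collected revenue. -/
theorem stmt_19 (n : ℕ) (v B τ xstar pstar y : Fin n → ℝ)
    (R : Finset (Fin n)) (r ALG : ℝ)
    (hr : 0 ≤ r) (hv : ∀ i, 0 ≤ v i) (hτ : ∀ i, 0 < τ i)
    (hps : ∀ i, pstar i = xstar i * (v i / τ i))
    (hpB : ∀ i, pstar i ≤ B i)
    (hx0 : ∀ i, 0 ≤ xstar i) (hx1 : ∑ i, xstar i ≤ 1)
    (hy0 : ∀ i, 0 ≤ y i)
    (hALG : ALG = r * ∑ i ∈ R, y i)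
    (hcase : ∀ i ∈ R, r * y i = B i ∨ v i / τ i < r) :
    ∑ i ∈ R, pstar i ≤ ALG + r :=
  stmt_19_general n v B τ xstar pstar y R r ALG hr hps hpB hx0 hx1 hy0 hALG hcase
end
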